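/- arXiv:2001.06998 — 3 statements merged into one kernel-verified Lean document; each statement's English description precedes it below -/
import Mathlib

section
/- Under Assumptions A, B and E (P₂ = 0 and f, g₁, …, g_m convex), let {xᵗ} be generated by SCP_ls, let S = Argmin F, and for each t let λᵗ ∈ ℝ₊ᵐ be a Lagrange multiplier of the t-th subproblem. Then there exist constants γ > 0 and θ ≥ 0 (one may take γ = 1/L_max with L_max an upper bound of {L_fᵗ + ⟨λᵗ, L_gᵗ⟩} and θ = M₀/(c L̲) with M₀ an upper bound of {(L_f − L_fᵗ)₊}) such that for every x̄ ∈ S and every t ≥ 0: (γ + θ)(F(x^{t+1}) − inf F) ≤ (1/2)‖x̄ − xᵗ‖² − (1/2)‖x^{t+1} − x̄‖² + θ(F(xᵗ) − inf F); in particular (1/2)‖x^{t+1} − x̄‖² ≤ (1/2)‖xᵗ − x̄‖² + (γ + θ)(F(xᵗ) − F(x^{t+1})). -/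
open Set Filter Topology Metric Bornology RealInnerProductSpace
open scoped Classical

noncomputable section

abbrev Euc (n : ℕ) : Type := EuclideanSpace ℝ (Fin n)

/-- Convex subdifferential of a real-valued function on an inner product space. -/
def ConvexSubdiff {H : Type*} [NormedAddCommGroup H] [InnerProductSpace ℝ H]
    (P : H → ℝ) (x : H) : Set H :=
  {ζ | ∀ y, ⟪ζ, y - x⟫ ≤ P y - P x}

/-- Regular (Fréchet) subdifferential of an extended-real-valued function. -/
def RegularSubdiff {H : Type*} [NormedAddCommGroup H] [InnerProductSpace ℝ H]
    (h : H → EReal) (x : H) : Set H :=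
  {ζ | h x ≠ ⊤ ∧ h x ≠ ⊥ ∧ ∀ ε : ℝ, 0 < ε →
    ∀ᶠ z in 𝓝 x,
      (((h x).toReal + ⟪ζ, z - x⟫ - ε * ‖z - x‖ : ℝ) : EReal) ≤ h z}

/-- Limiting (Mordukhovich) subdifferential. -/
def LimSubdiff {H : Type*} [NormedAddCommGroup H] [InnerProductSpace ℝ H]
    (h : H → EReal) (x : H) : Set H :=
  {ζ | ∃ xs ζs : ℕ → H, (∀ k, ζs k ∈ RegularSubdiff h (xs k)) ∧
    Tendsto xs atTop (𝓝 x) ∧ Tendsto (fun k => h (xs k)) atTop (𝓝 (h x)) ∧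
    Tendsto ζs atTop (𝓝 ζ)}

/-- The Kurdyka–Łojasiewicz property with exponent `α` at a point. -/
def KLExpAt {H : Type*} [NormedAddCommGroup H] [InnerProductSpace ℝ H]
    (h : H → EReal) (α : ℝ) (xhat : H) : Prop :=
  ∃ a₀ : ℝ, 0 < a₀ ∧ ∃ a : ℝ, 0 < a ∧ ∃ V ∈ 𝓝 xhat, ∀ x ∈ V,
    h xhat < h x → h x < h xhat + (a : EReal) →
    1 ≤ a₀ * (1 - α) * ((h x).toReal - (h xhat).toReal) ^ (-α) *
        infDist 0 (LimSubdiff h x)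

/-- The general Kurdyka–Łojasiewicz property at a point. -/
def KLAt {H : Type*} [NormedAddCommGroup H] [InnerProductSpace ℝ H]
    (h : H → EReal) (xhat : H) : Prop :=
  ∃ a : ℝ, 0 < a ∧ ∃ V ∈ 𝓝 xhat, ∃ φ φ' : ℝ → ℝ,
    φ 0 = 0 ∧ ContinuousOn φ (Ico 0 a) ∧ ConcaveOn ℝ (Ico 0 a) φ ∧
    (∀ s ∈ Ioo 0 a, HasDerivAt φ (φ' s) s ∧ 0 < φ' s) ∧
    ∀ x ∈ V, h xhat < h x → h x < h xhat + (a : EReal) →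
      1 ≤ φ' ((h x).toReal - (h xhat).toReal) * infDist 0 (LimSubdiff h x)

/-- The extended objective of problem (P). -/
def Fobj {n m : ℕ} (f P1 P2 : Euc n → ℝ) (g : Fin m → Euc n → ℝ) (x : Euc n) : EReal :=
  if ∀ i, g i x ≤ 0 then ((f x + P1 x - P2 x : ℝ) : EReal) else ⊤

/-- The moving balls constraint functions. -/
def barG {n m : ℕ} (g : Fin m → Euc n → ℝ) (g' : Fin m → Euc n → Euc n)
    (x y : Euc n) (w : EuclideanSpace ℝ (Fin m)) (i : Fin m) : ℝ :=
  g i y + ⟪g' i y, x - y⟫ + w i / 2 * ‖x - y‖ ^ 2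

/-- The space `ℝⁿ × ℝⁿ × ℝᵐ` with the (L²) Euclidean inner product. -/
abbrev PS (n m : ℕ) : Type :=
  WithLp 2 (Euc n × WithLp 2 (Euc n × EuclideanSpace ℝ (Fin m)))

/-- The potential function `bar F`. -/
def barF {n m : ℕ} (f P1 P2 : Euc n → ℝ) (g : Fin m → Euc n → ℝ)
    (g' : Fin m → Euc n → Euc n)
    (p : PS n m) : EReal :=
  if ∀ i, barG g g' p.ofLp.1 p.ofLp.2.ofLp.1 p.ofLp.2.ofLp.2 i ≤ 0 then
    ((f p.ofLp.1 + P1 p.ofLp.1 - P2 p.ofLp.1 : ℝ) : EReal) else ⊤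

/-- Stationary points of problem (P). -/
def IsStationaryPt {n m : ℕ} (f P1 P2 : Euc n → ℝ) (f' : Euc n → Euc n)
    (g : Fin m → Euc n → ℝ) (g' : Fin m → Euc n → Euc n) (x : Euc n) : Prop :=
  (∀ i, g i x ≤ 0) ∧ ∃ lam : Fin m → ℝ, (∀ i, 0 ≤ lam i) ∧
    (∀ i, lam i * g i x = 0) ∧
    ∃ u ∈ ConvexSubdiff P1 x, ∃ v ∈ ConvexSubdiff P2 x,
      f' x + u - v + ∑ i, lam i • g' i x = 0

/-- Assumptions A (smoothness, Lipschitz gradients, level-boundedness) and B (MFCQ). -/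
def AssumptionAB {n m : ℕ} (f P1 P2 : Euc n → ℝ) (f' : Euc n → Euc n)
    (g : Fin m → Euc n → ℝ) (g' : Fin m → Euc n → Euc n)
    (Lf : ℝ) (Lg : Fin m → ℝ) : Prop :=
  (∀ x, HasGradientAt f (f' x) x) ∧ LipschitzWith Lf.toNNReal f' ∧
  ConvexOn ℝ univ P1 ∧ Continuous P1 ∧ ConvexOn ℝ univ P2 ∧ Continuous P2 ∧
  (∀ i x, HasGradientAt (g i) (g' i x) x) ∧
  (∀ i, LipschitzWith (Lg i).toNNReal (g' i)) ∧
  {x : Euc n | ∀ i, g i x ≤ 0}.Nonempty ∧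
  (∀ σ : ℝ, IsBounded {x | Fobj f P1 P2 g x ≤ (σ : EReal)}) ∧
  (∀ x : Euc n, (∀ i, g i x ≤ 0) → ∃ d, ∀ i, g i x = 0 → ⟪g' i x, d⟫ < 0)

/-- The sequences generated by the SCP_ls algorithm. -/
structure SCPlsSeq {n m : ℕ} (f P1 P2 : Euc n → ℝ) (f' : Euc n → Euc n)
    (g : Fin m → Euc n → ℝ) (g' : Fin m → Euc n → Euc n)
    (c Llo : ℝ) (x ξ : ℕ → Euc n) (Lfs : ℕ → ℝ)
    (Lgs : ℕ → EuclideanSpace ℝ (Fin m)) : Prop where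
  feas0 : ∀ i, g i (x 0) ≤ 0
  subgrad : ∀ t, ξ t ∈ ConvexSubdiff P2 (x t)
  Lf_lb : ∀ t, Llo ≤ Lfs t
  Lg_lb : ∀ t i, Llo ≤ Lgs t i
  bdd : ∃ M : ℝ, ∀ t, Lfs t ≤ M ∧ ∀ i, Lgs t i ≤ M
  feas_sub : ∀ t i, barG g g' (x (t + 1)) (x t) (Lgs t) i ≤ 0
  min : ∀ t z, (∀ i, barG g g' z (x t) (Lgs t) i ≤ 0) →
    ⟪f' (x t) - ξ t, x (t + 1) - x t⟫ + Lfs t / 2 * ‖x (t + 1) - x t‖ ^ 2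
        + P1 (x (t + 1))
      ≤ ⟪f' (x t) - ξ t, z - x t⟫ + Lfs t / 2 * ‖z - x t‖ ^ 2 + P1 z
  uniq : ∀ t z, (∀ i, barG g g' z (x t) (Lgs t) i ≤ 0) →
    ⟪f' (x t) - ξ t, z - x t⟫ + Lfs t / 2 * ‖z - x t‖ ^ 2 + P1 z
      ≤ ⟪f' (x t) - ξ t, x (t + 1) - x t⟫ + Lfs t / 2 * ‖x (t + 1) - x t‖ ^ 2
        + P1 (x (t + 1)) → z = x (t + 1)
  feas : ∀ t i, g i (x (t + 1)) ≤ 0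
  descent : ∀ t, f (x (t + 1)) + P1 (x (t + 1)) - P2 (x (t + 1)) ≤
    f (x t) + P1 (x t) - P2 (x t) - c / 2 * ‖x (t + 1) - x t‖ ^ 2

/-- Cluster points of a sequence (limits of subsequences). -/
def seqClusterPts {X : Type*} [TopologicalSpace X] (u : ℕ → X) : Set X :=
  {p | ∃ φ : ℕ → ℕ, StrictMono φ ∧ Tendsto (u ∘ φ) atTop (𝓝 p)}

/-! The KKT conditions of the `t`-th subproblem make `x (t + 1)` the minimiser of a Lagrangian
that is strongly convex with modulus `Lfs t + ⟨λᵗ, Lgs t⟩`. Evaluating it at a minimiser `xbar`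
of `F`, and using convexity of `f` and the `gᵢ` together with the descent lemma for `f`, bounds
`F (x (t + 1)) - F xbar` by that modulus times the decrease of `½‖x - xbar‖²`, up to a defect
`(Lf - Lfs t)₊ / 2 ‖x (t + 1) - x t‖²` which the sufficient-decrease condition pays for.

To divide by the modulus uniformly in `t`, the multipliers must be bounded. MFCQ at one feasible
point gives a Slater point `xs`; since the iterates stay in a bounded level set and the weights
are bounded, the point `x t + s • (xs - x t)` for a fixed small `s` is strictly feasible for every
subproblem with a uniform margin, and comparing Lagrangian values there bounds `∑ᵢ λᵗᵢ`. -/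

section InnerProductSpace

variable {H : Type*} [NormedAddCommGroup H] [InnerProductSpace ℝ H]

-- The objective of the SCP_ls subproblem at `y`, with `a = ∇f y - ξ` and `L = Lfs t`.
def proxModel (P : H → ℝ) (a y : H) (L : ℝ) (z : H) : ℝ :=
  ⟪a, z - y⟫ + L / 2 * ‖z - y‖ ^ 2 + P z

theorem eq_zero_of_mem_convexSubdiff_const {r : ℝ} {x ζ : H}
    (hζ : ζ ∈ ConvexSubdiff (fun _ => r) x) : ζ = 0 := by
  have h := hζ (x + ζ)
  simp only [add_sub_cancel_left, sub_self] at h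
  exact real_inner_self_nonpos.1 h

theorem proxModel_add_sq_le_of_mem_convexSubdiff {P : H → ℝ} {a y x' u : H} {L : ℝ}
    (hu : u ∈ ConvexSubdiff P x') (hopt : a + L • (x' - y) + u = 0) (z : H) :
    proxModel P a y L x' + L / 2 * ‖z - x'‖ ^ 2 ≤ proxModel P a y L z := by
  have hsub : -⟪a + L • (x' - y), z - x'⟫ ≤ P z - P x' := by
    have := hu z
    rwa [eq_neg_of_add_eq_zero_right hopt, inner_neg_left] at this
  have hsplit : z - y = (z - x') + (x' - y) := by abel
  simp only [proxModel, hsplit, norm_add_sq_real, inner_add_right, inner_add_left,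
    real_inner_smul_left] at hsub ⊢
  rw [← real_inner_comm (x' - y) (z - x')] at hsub
  linarith

theorem exists_proxModel_sub_le {P : H → ℝ} {a : H → H} (hP : Continuous P) (ha : Continuous a)
    {S : Set H} (hS : IsCompact S) {T : Set ℝ} (hT : IsCompact T) :
    ∃ K, ∀ y ∈ S, ∀ z ∈ S, ∀ v ∈ S, ∀ L ∈ T,
      proxModel P (a y) y L z - proxModel P (a y) y L v ≤ K := by
  obtain ⟨K, hK⟩ := (hS.prod (hS.prod (hS.prod hT))).bddAbove_image
    (f := fun p => proxModel P (a p.1) p.1 p.2.2.2 p.2.1 - proxModel P (a p.1) p.1 p.2.2.2 p.2.2.1)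
    (by unfold proxModel; fun_prop)
  exact ⟨K, fun y hy z hz v hv L hL => hK ⟨(y, z, v, L), ⟨hy, hz, hv, hL⟩, rfl⟩⟩

variable [CompleteSpace H]

theorem HasGradientAt.hasDerivAt_add_smul {φ : H → ℝ} {φ' y d : H} {s : ℝ}
    (h : HasGradientAt φ φ' (y + s • d)) :
    HasDerivAt (fun t : ℝ => φ (y + t • d)) ⟪φ', d⟫ s := by
  have hline : HasDerivAt (fun t : ℝ => y + t • d) d s := by
    simpa using ((hasDerivAt_id s).smul_const d).const_add y
  simpa [InnerProductSpace.toDual_apply_apply, Function.comp_def] using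
    h.hasFDerivAt.comp_hasDerivAt s hline

theorem ConvexOn.inner_le_sub_of_hasGradientAt {φ : H → ℝ} {φ' y : H}
    (hconv : ConvexOn ℝ univ φ) (hφ : HasGradientAt φ φ' y) (z : H) :
    ⟪φ', z - y⟫ ≤ φ z - φ y := by
  have hline : ConvexOn ℝ univ (fun t : ℝ => φ (y + t • (z - y))) := by
    simpa [Function.comp_def, AffineMap.lineMap_apply, add_comm] using
      hconv.comp_affineMap (AffineMap.lineMap y z)
  have hd : HasDerivAt (fun t : ℝ => φ (y + t • (z - y))) ⟪φ', z - y⟫ 0 :=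
    HasGradientAt.hasDerivAt_add_smul (by simpa using hφ)
  simpa [slope_def_field] using
    hline.le_slope_of_hasDerivAt (mem_univ 0) (mem_univ 1) zero_lt_one hd

theorem le_add_inner_add_sq_of_lipschitzWith {φ : H → ℝ} {φ' : H → H} {K : NNReal}
    (hφ : ∀ z, HasGradientAt φ (φ' z) z) (hlip : LipschitzWith K φ') (y z : H) :
    φ z ≤ φ y + ⟪φ' y, z - y⟫ + K / 2 * ‖z - y‖ ^ 2 := by
  set d := z - y
  have hderiv : ∀ s : ℝ, HasDerivAt (fun t : ℝ => φ (y + t • d)) ⟪φ' (y + s • d), d⟫ s :=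
    fun s => (hφ _).hasDerivAt_add_smul
  have hbound : ∀ s ∈ Ico (0 : ℝ) 1, ⟪φ' (y + s • d), d⟫ ≤ ⟪φ' y, d⟫ + K * s * ‖d‖ ^ 2 := by
    intro s hs
    have hlip_s : ‖φ' (y + s • d) - φ' y‖ ≤ K * (s * ‖d‖) := by
      simpa [norm_smul, abs_of_nonneg hs.1] using hlip.norm_sub_le (y + s • d) y
    have := real_inner_le_norm (φ' (y + s • d) - φ' y) d
    rw [inner_sub_left] at this
    nlinarith [norm_nonneg d]
  have hB : ∀ s : ℝ, HasDerivAt (fun t : ℝ => φ y + t * ⟪φ' y, d⟫ + K / 2 * t ^ 2 * ‖d‖ ^ 2)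
      (⟪φ' y, d⟫ + K * s * ‖d‖ ^ 2) s := by
    intro s
    refine ((((hasDerivAt_id s).mul_const ⟪φ' y, d⟫).const_add (φ y)).add
      (((hasDerivAt_pow 2 s).const_mul ((K : ℝ) / 2)).mul_const (‖d‖ ^ 2))).congr_deriv ?_
    simp only [Nat.cast_ofNat]
    ring
  have := image_le_of_deriv_right_le_deriv_boundary
    (fun s _ => (hderiv s).continuousAt.continuousWithinAt)
    (fun s _ => (hderiv s).hasDerivWithinAt) (by simp)
    (fun s _ => (hB s).continuousAt.continuousWithinAt)
    (fun s _ => (hB s).hasDerivWithinAt) hbound (right_mem_Icc.2 zero_le_one)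
  simpa [d] using this

theorem HasDerivAt.eventually_neg_nhdsGT {ψ : ℝ → ℝ} {ψ' a : ℝ} (h : HasDerivAt ψ ψ' a)
    (ha : ψ a ≤ 0) (hψ' : ψ a = 0 → ψ' < 0) : ∀ᶠ t in 𝓝[>] a, ψ t < 0 := by
  rcases ha.lt_or_eq with hlt | heq
  · exact (h.continuousAt.eventually (gt_mem_nhds hlt)).filter_mono nhdsWithin_le_nhds
  · have hslope : Tendsto (slope ψ a) (𝓝[>] a) (𝓝 ψ') :=
      (hasDerivAt_iff_tendsto_slope.1 h).mono_left (nhdsGT_le_nhdsNE a)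
    filter_upwards [hslope.eventually (gt_mem_nhds (hψ' heq)), self_mem_nhdsWithin]
      with t hneg (hat : a < t)
    have := sub_smul_slope_vadd ψ a t
    simp only [smul_eq_mul, vadd_eq_add, heq, add_zero] at this
    rw [← this]
    exact mul_neg_of_pos_of_neg (sub_pos.2 hat) hneg

theorem exists_forall_lt_zero_of_mfcq {ι : Type*} [Finite ι] {g : ι → H → ℝ} {g' : ι → H}
    {w d : H} (hg : ∀ i, HasGradientAt (g i) (g' i) w) (hw : ∀ i, g i w ≤ 0)
    (hd : ∀ i, g i w = 0 → ⟪g' i, d⟫ < 0) : ∃ x₀, ∀ i, g i x₀ < 0 := by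
  have hev : ∀ᶠ t in 𝓝[>] (0 : ℝ), ∀ i, g i (w + t • d) < 0 :=
    eventually_all.2 fun i =>
      (HasGradientAt.hasDerivAt_add_smul (by simpa using hg i)).eventually_neg_nhdsGT
        (by simpa using hw i) (by simpa using hd i)
  obtain ⟨t, ht⟩ := hev.exists
  exact ⟨w + t • d, ht⟩

theorem exists_pos_forall_add_le_zero {ι : Type*} [Finite ι] {a : ι → ℝ} (ha : ∀ i, a i < 0) :
    ∃ ε, 0 < ε ∧ ∀ i, a i + ε ≤ 0 := by
  have hev : ∀ᶠ ε in 𝓝[>] (0 : ℝ), ∀ i, a i + ε < 0 :=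
    eventually_all.2 fun i => (((continuous_const.add continuous_id).tendsto' 0 (a i)
      (by simp)).eventually (gt_mem_nhds (ha i))).filter_mono nhdsWithin_le_nhds
  obtain ⟨ε, hε, hεpos⟩ := (hev.and self_mem_nhdsWithin).exists
  exact ⟨ε, hεpos, fun i => (hε i).le⟩

end InnerProductSpace

theorem Fobj_eq_of_feasible {n m : ℕ} {f P1 P2 : Euc n → ℝ} {g : Fin m → Euc n → ℝ} {x : Euc n}
    (hx : ∀ i, g i x ≤ 0) : Fobj f P1 P2 g x = ((f x + P1 x - P2 x : ℝ) : EReal) :=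
  if_pos hx

section MovingBalls

variable {n m : ℕ} {g : Fin m → Euc n → ℝ} {g' : Fin m → Euc n → Euc n}

theorem sum_mul_barG (lam : Fin m → ℝ) (z y : Euc n) (w : EuclideanSpace ℝ (Fin m)) :
    ∑ i, lam i * barG g g' z y w i =
      ∑ i, lam i * g i y + ⟪∑ i, lam i • g' i y, z - y⟫
        + (∑ i, lam i * w i) / 2 * ‖z - y‖ ^ 2 := by
  simp only [barG, mul_add, Finset.sum_add_distrib, sum_inner, real_inner_smul_left,
    Finset.sum_div, Finset.sum_mul]
  congr 1
  exact Finset.sum_congr rfl fun i _ => by ring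

theorem barG_le_of_convexOn {i : Fin m} {y : Euc n} (hgconv : ConvexOn ℝ univ (g i))
    (hg : HasGradientAt (g i) (g' i y) y) (z : Euc n) (w : EuclideanSpace ℝ (Fin m)) :
    barG g g' z y w i ≤ g i z + w i / 2 * ‖z - y‖ ^ 2 := by
  have := hgconv.inner_le_sub_of_hasGradientAt hg z
  simp only [barG]
  linarith

theorem proxModel_add_sq_le_lagrangian {P : Euc n → ℝ} {a y x' u : Euc n} {L : ℝ}
    {w : EuclideanSpace ℝ (Fin m)} {lam : Fin m → ℝ}
    (hcompl : ∀ i, lam i * barG g g' x' y w i = 0) (hu : u ∈ ConvexSubdiff P x')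
    (hfoc : a + (L + ∑ i, lam i * w i) • (x' - y) + u + ∑ i, lam i • g' i y = 0) (z : Euc n) :
    proxModel P a y L x' + (L + ∑ i, lam i * w i) / 2 * ‖z - x'‖ ^ 2 ≤
      proxModel P a y L z + ∑ i, lam i * barG g g' z y w i := by
  have hprox := proxModel_add_sq_le_of_mem_convexSubdiff (a := a + ∑ i, lam i • g' i y) hu
    (by rw [← hfoc]; abel) z
  have hmodel : ∀ v, proxModel P (a + ∑ i, lam i • g' i y) y (L + ∑ i, lam i * w i) v =
      proxModel P a y L v + ∑ i, lam i * barG g g' v y w i - ∑ i, lam i * g i y := by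
    intro v
    simp only [proxModel, sum_mul_barG, inner_add_left]
    ring
  have hzero : ∑ i, lam i * barG g g' x' y w i = 0 := Finset.sum_eq_zero fun i _ => hcompl i
  rw [hmodel, hmodel, hzero] at hprox
  linarith

theorem exists_barG_le_neg_of_slater (hg : ∀ i x, HasGradientAt (g i) (g' i x) x)
    (hgconv : ∀ i, ConvexOn ℝ univ (g i)) {xs : Euc n} {ε : ℝ} (hε : 0 < ε)
    (hxs : ∀ i, g i xs + ε ≤ 0) (R : ℝ) {M : ℝ} (hM : 0 ≤ M) :
    ∃ s, 0 < s ∧ s ≤ 1 ∧ ∀ (y : Euc n) (w : EuclideanSpace ℝ (Fin m)),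
      (∀ i, g i y ≤ 0) → ‖xs - y‖ ≤ R → (∀ i, w i ≤ M) →
        ∀ i, barG g g' (y + s • (xs - y)) y w i ≤ -(s * ε / 2) := by
  set s := min 1 (ε / (M * R ^ 2 + 1))
  have hden : 0 < M * R ^ 2 + 1 := by positivity
  have hs0 : 0 < s := lt_min one_pos (div_pos hε hden)
  have hs1 : s ≤ 1 := min_le_left _ _
  have hsmall : s * (M * R ^ 2) ≤ ε := by
    have := (le_div_iff₀ hden).1 (min_le_right 1 (ε / (M * R ^ 2 + 1)))
    nlinarith
  refine ⟨s, hs0, hs1, fun y w hy hR hw i => ?_⟩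
  have hconv : g i (y + s • (xs - y)) ≤ (1 - s) * g i y + s * g i xs := by
    have := (hgconv i).2 (mem_univ y) (mem_univ xs) (sub_nonneg.2 hs1) hs0.le (by ring)
    rwa [show (1 - s) • y + s • xs = y + s • (xs - y) by module] at this
  have hdist : ‖y + s • (xs - y) - y‖ ^ 2 ≤ s ^ 2 * R ^ 2 := by
    rw [add_sub_cancel_left, norm_smul, Real.norm_of_nonneg hs0.le, mul_pow]
    gcongr
  have hquad : w i / 2 * ‖y + s • (xs - y) - y‖ ^ 2 ≤ M / 2 * (s ^ 2 * R ^ 2) := by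
    have := mul_le_mul_of_nonneg_right (hw i) (sq_nonneg ‖y + s • (xs - y) - y‖)
    nlinarith [mul_le_mul_of_nonneg_left hdist hM]
  have hgy := mul_nonneg (sub_nonneg.2 hs1) (neg_nonneg.2 (hy i))
  have := barG_le_of_convexOn (hgconv i) (hg i y) (y + s • (xs - y)) w
  nlinarith [hxs i]

theorem mul_sum_le_of_barG_le_neg {P : Euc n → ℝ} {a y x' u z : Euc n} {L δ : ℝ}
    {w : EuclideanSpace ℝ (Fin m)} {lam : Fin m → ℝ} (hlam : ∀ i, 0 ≤ lam i)
    (hA : 0 ≤ L + ∑ i, lam i * w i) (hcompl : ∀ i, lam i * barG g g' x' y w i = 0)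
    (hu : u ∈ ConvexSubdiff P x')
    (hfoc : a + (L + ∑ i, lam i * w i) • (x' - y) + u + ∑ i, lam i • g' i y = 0)
    (hz : ∀ i, barG g g' z y w i ≤ -δ) :
    δ * ∑ i, lam i ≤ proxModel P a y L z - proxModel P a y L x' := by
  have hlag := proxModel_add_sq_le_lagrangian hcompl hu hfoc z
  have hneg : ∑ i, lam i * barG g g' z y w i ≤ -(δ * ∑ i, lam i) := by
    rw [Finset.mul_sum, ← Finset.sum_neg_distrib]
    exact Finset.sum_le_sum fun i _ => by nlinarith [hlam i, hz i]
  nlinarith [sq_nonneg ‖z - x'‖]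

theorem objective_le_of_lagrangian {f P : Euc n → ℝ} {f' : Euc n → Euc n} {K : NNReal}
    (hf : ∀ z, HasGradientAt f (f' z) z) (hflip : LipschitzWith K f')
    (hfconv : ConvexOn ℝ univ f) {y x' u xbar : Euc n}
    (hg : ∀ i, HasGradientAt (g i) (g' i y) y) (hgconv : ∀ i, ConvexOn ℝ univ (g i)) {L : ℝ}
    {w : EuclideanSpace ℝ (Fin m)} {lam : Fin m → ℝ} (hlam : ∀ i, 0 ≤ lam i)
    (hcompl : ∀ i, lam i * barG g g' x' y w i = 0) (hu : u ∈ ConvexSubdiff P x')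
    (hfoc : f' y + (L + ∑ i, lam i * w i) • (x' - y) + u + ∑ i, lam i • g' i y = 0)
    (hxbar : ∀ i, g i xbar ≤ 0) :
    f x' + P x' ≤ f xbar + P xbar
      + (L + ∑ i, lam i * w i) * (1 / 2 * ‖xbar - y‖ ^ 2 - 1 / 2 * ‖x' - xbar‖ ^ 2)
      + (K - L) / 2 * ‖x' - y‖ ^ 2 := by
  have hlag := proxModel_add_sq_le_lagrangian hcompl hu hfoc xbar
  have hbar : ∑ i, lam i * barG g g' xbar y w i ≤ (∑ i, lam i * w i) / 2 * ‖xbar - y‖ ^ 2 := by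
    rw [Finset.sum_div, Finset.sum_mul]
    refine Finset.sum_le_sum fun i _ => ?_
    have := barG_le_of_convexOn (hgconv i) (hg i) xbar w
    nlinarith [hlam i, hxbar i]
  have hdescent := le_add_inner_add_sq_of_lipschitzWith hf hflip y x'
  have hsupport := hfconv.inner_le_sub_of_hasGradientAt (hf y) xbar
  rw [norm_sub_rev x' xbar]
  simp only [proxModel] at hlag
  nlinarith

end MovingBalls

theorem fundamental_ineq_of_descent {Fcur Fnext Fstar a b d A L Λ K Llo c : ℝ} (hc : 0 < c)
    (hLlo : 0 < Llo) (hK : 0 ≤ K) (hL : Llo ≤ L) (hLA : L ≤ A) (hAΛ : A ≤ Λ) (hd : 0 ≤ d)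
    (hkey : Fnext ≤ Fstar + A * (a - b) + (K - L) / 2 * d) (hdesc : Fnext ≤ Fcur - c / 2 * d)
    (hstar : Fstar ≤ Fnext) :
    (1 / Λ + K / (c * Llo)) * (Fnext - Fstar) ≤ a - b + K / (c * Llo) * (Fcur - Fstar) ∧
      b ≤ a + (1 / Λ + K / (c * Llo)) * (Fcur - Fnext) := by
  set θ := K / (c * Llo)
  have hA : 0 < A := by linarith
  have hdec : c / 2 * d ≤ Fcur - Fnext := by linarith
  have hdec0 : 0 ≤ Fcur - Fnext := by nlinarith
  have hθ : K / c ≤ θ * A := calc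
    K / c = θ * Llo := by simp only [θ]; field_simp
    _ ≤ θ * A := mul_le_mul_of_nonneg_left (by linarith) (by positivity)
  have hsq : (K - L) / 2 * d ≤ θ * A * (Fcur - Fnext) := calc
    (K - L) / 2 * d ≤ K / c * (c / 2 * d) := by
      rw [show K / c * (c / 2 * d) = K / 2 * d by field_simp]
      nlinarith
    _ ≤ K / c * (Fcur - Fnext) := by gcongr
    _ ≤ θ * A * (Fcur - Fnext) := by gcongr
  have hgap : Fnext - Fstar ≤ A * (a - b + θ * (Fcur - Fnext)) := by linarith
  have hstep : 1 / Λ * (Fnext - Fstar) ≤ a - b + θ * (Fcur - Fnext) := calc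
    1 / Λ * (Fnext - Fstar) ≤ 1 / A * (Fnext - Fstar) := by gcongr
    _ ≤ a - b + θ * (Fcur - Fnext) := by
      rw [one_div_mul_eq_div, div_le_iff₀ hA]; linarith
  have hΛ : 0 ≤ 1 / Λ := one_div_nonneg.2 (by linarith)
  constructor
  · linarith
  · nlinarith [mul_nonneg hΛ (sub_nonneg.2 hstar), mul_nonneg hΛ hdec0]

namespace SCPlsSeq

variable {n m : ℕ} {f P1 P2 : Euc n → ℝ} {f' : Euc n → Euc n} {g : Fin m → Euc n → ℝ}
  {g' : Fin m → Euc n → Euc n} {c Llo : ℝ} {x ξ : ℕ → Euc n} {Lfs : ℕ → ℝ}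
  {Lgs : ℕ → EuclideanSpace ℝ (Fin m)}

theorem feasible (hseq : SCPlsSeq f P1 P2 f' g g' c Llo x ξ Lfs Lgs) :
    ∀ t i, g i (x t) ≤ 0
  | 0 => hseq.feas0
  | t + 1 => hseq.feas t

theorem antitone_objective (hseq : SCPlsSeq f P1 P2 f' g g' c Llo x ξ Lfs Lgs) (hc : 0 ≤ c) :
    Antitone fun t => f (x t) + P1 (x t) - P2 (x t) :=
  antitone_nat_of_succ_le fun t => (hseq.descent t).trans (sub_le_self _ (by positivity))

theorem isBounded_range (hseq : SCPlsSeq f P1 P2 f' g g' c Llo x ξ Lfs Lgs) (hc : 0 ≤ c)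
    (hlevel : ∀ σ : ℝ, IsBounded {x | Fobj f P1 P2 g x ≤ (σ : EReal)}) :
    IsBounded (range x) := by
  refine (hlevel (f (x 0) + P1 (x 0) - P2 (x 0))).subset ?_
  rintro _ ⟨t, rfl⟩
  rw [mem_ofPred_eq, Fobj_eq_of_feasible (hseq.feasible t)]
  exact EReal.coe_le_coe_iff.2 (hseq.antitone_objective hc (Nat.zero_le t))

theorem le_stepsize (hseq : SCPlsSeq f P1 P2 f' g g' c Llo x ξ Lfs Lgs) (hLlo : 0 ≤ Llo)
    {lam : ℕ → Fin m → ℝ} (hlam : ∀ t i, 0 ≤ lam t i) (t : ℕ) :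
    Lfs t ≤ Lfs t + ∑ i, lam t i * Lgs t i :=
  le_add_of_nonneg_right <| Finset.sum_nonneg fun i _ =>
    mul_nonneg (hlam t i) (hLlo.trans (hseq.Lg_lb t i))

theorem exists_stepsize_bound (hseq : SCPlsSeq f P1 P2 f' g g' c Llo x ξ Lfs Lgs)
    (hLlo : 0 < Llo) (hbdd : IsBounded (range x)) (hf' : Continuous f') (hP1 : Continuous P1)
    (hg : ∀ i x, HasGradientAt (g i) (g' i x) x) (hgconv : ∀ i, ConvexOn ℝ univ (g i))
    (hslater : ∃ xs, ∀ i, g i xs < 0) {lam : ℕ → Fin m → ℝ} (hlam : ∀ t i, 0 ≤ lam t i)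
    (hcompl : ∀ t i, lam t i * barG g g' (x (t + 1)) (x t) (Lgs t) i = 0)
    (hfoc : ∀ t, ∃ u ∈ ConvexSubdiff P1 (x (t + 1)),
      f' (x t) + (Lfs t + ∑ i, lam t i * Lgs t i) • (x (t + 1) - x t) + u
        + ∑ i, lam t i • g' i (x t) = 0) :
    ∃ Λ, ∀ t, Lfs t + ∑ i, lam t i * Lgs t i ≤ Λ := by
  obtain ⟨xs, hxs⟩ := hslater
  obtain ⟨ε, hε, hxsε⟩ := exists_pos_forall_add_le_zero hxs
  obtain ⟨M, hM⟩ := hseq.bdd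
  have hM0 : 0 ≤ M := hLlo.le.trans ((hseq.Lf_lb 0).trans (hM 0).1)
  obtain ⟨R, hR⟩ := hbdd.subset_closedBall xs
  have hxR : ∀ t, x t ∈ closedBall xs R := fun t => hR ⟨t, rfl⟩
  obtain ⟨s, hs0, hs1, hsfeas⟩ := exists_barG_le_neg_of_slater hg hgconv hε hxsε R hM0
  have hR0 : 0 ≤ R := dist_nonneg.trans (hxR 0)
  have hzR : ∀ t, x t + s • (xs - x t) ∈ closedBall xs R := fun t =>
    (convex_closedBall xs R).add_smul_sub_mem (hxR t) (mem_closedBall_self hR0) ⟨hs0.le, hs1⟩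
  obtain ⟨K, hK⟩ := exists_proxModel_sub_le hP1 hf' (isCompact_closedBall xs R)
    (isCompact_Icc (a := Llo) (b := M))
  have hsum : ∀ t, s * ε / 2 * ∑ i, lam t i ≤ K := fun t => by
    obtain ⟨u, hu, hfoc_t⟩ := hfoc t
    have hA : 0 ≤ Lfs t + ∑ i, lam t i * Lgs t i :=
      hLlo.le.trans ((hseq.Lf_lb t).trans (hseq.le_stepsize hLlo.le hlam t))
    have hz := hsfeas (x t) (Lgs t) (hseq.feasible t)
      (by simpa [dist_eq_norm'] using hxR t) (hM t).2
    exact (mul_sum_le_of_barG_le_neg (hlam t) hA (hcompl t) hu hfoc_t hz).trans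
      (hK _ (hxR t) _ (hzR t) _ (hxR (t + 1)) _ ⟨hseq.Lf_lb t, (hM t).1⟩)
  refine ⟨M + M * (K / (s * ε / 2)), fun t => ?_⟩
  have hsum_t : ∑ i, lam t i ≤ K / (s * ε / 2) := by
    rw [le_div_iff₀ (by positivity), mul_comm]; exact hsum t
  have hweights : ∑ i, lam t i * Lgs t i ≤ M * ∑ i, lam t i := by
    rw [Finset.mul_sum]
    exact Finset.sum_le_sum fun i _ => by nlinarith [hlam t i, (hM t).2 i]
  nlinarith [(hM t).1]

end SCPlsSeq

/-- the fundamental inequality for SCP_ls in the convex setting. -/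
theorem stmt13 {n m : ℕ} (f P1 P2 : Euc n → ℝ) (f' : Euc n → Euc n)
    (g : Fin m → Euc n → ℝ) (g' : Fin m → Euc n → Euc n)
    (Lf : ℝ) (Lg : Fin m → ℝ)
    (hAB : AssumptionAB f P1 P2 f' g g' Lf Lg)
    (hP2 : P2 = fun _ => 0) (hfconv : ConvexOn ℝ univ f)
    (hgconv : ∀ i, ConvexOn ℝ univ (g i))
    (c Llo : ℝ) (hc : 0 < c) (hLlo : 0 < Llo)
    (x ξ : ℕ → Euc n) (Lfs : ℕ → ℝ) (Lgs : ℕ → EuclideanSpace ℝ (Fin m))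
    (hseq : SCPlsSeq f P1 P2 f' g g' c Llo x ξ Lfs Lgs)
    (lam : ℕ → Fin m → ℝ)
    (hlam_nonneg : ∀ t i, 0 ≤ lam t i)
    (hcompl : ∀ t i, lam t i * barG g g' (x (t + 1)) (x t) (Lgs t) i = 0)
    (hfoc : ∀ t, ∃ u ∈ ConvexSubdiff P1 (x (t + 1)),
      f' (x t) - ξ t + (Lfs t + ∑ i, lam t i * Lgs t i) • (x (t + 1) - x t) + u
        + ∑ i, lam t i • g' i (x t) = 0) :
    ∃ γ : ℝ, 0 < γ ∧ ∃ θ : ℝ, 0 ≤ θ ∧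
      ∀ xbar : Euc n, (∀ i, g i xbar ≤ 0) →
        (∀ z, Fobj f P1 P2 g xbar ≤ Fobj f P1 P2 g z) →
        ∀ t : ℕ,
          ((γ + θ) * ((f (x (t + 1)) + P1 (x (t + 1)) - P2 (x (t + 1)))
              - (f xbar + P1 xbar - P2 xbar)) ≤
            1 / 2 * ‖xbar - x t‖ ^ 2 - 1 / 2 * ‖x (t + 1) - xbar‖ ^ 2
              + θ * ((f (x t) + P1 (x t) - P2 (x t)) - (f xbar + P1 xbar - P2 xbar))) ∧
          (1 / 2 * ‖x (t + 1) - xbar‖ ^ 2 ≤ 1 / 2 * ‖x t - xbar‖ ^ 2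
            + (γ + θ) * ((f (x t) + P1 (x t) - P2 (x t))
              - (f (x (t + 1)) + P1 (x (t + 1)) - P2 (x (t + 1))))) := by
  obtain ⟨hf, hflip, -, hP1, -, -, hg, -, ⟨w, hw⟩, hlevel, hmfcq⟩ := hAB
  subst hP2
  have hξ : ∀ t, ξ t = 0 := fun t => eq_zero_of_mem_convexSubdiff_const (hseq.subgrad t)
  simp only [hξ, sub_zero] at hfoc
  obtain ⟨d, hd⟩ := hmfcq w hw
  obtain ⟨Λ, hΛ⟩ := hseq.exists_stepsize_bound hLlo (hseq.isBounded_range hc.le hlevel)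
    hflip.continuous hP1 hg hgconv (exists_forall_lt_zero_of_mfcq (fun i => hg i w) hw hd)
    hlam_nonneg hcompl hfoc
  have hΛpos : 0 < Λ :=
    hLlo.trans_le ((hseq.Lf_lb 0).trans ((hseq.le_stepsize hLlo.le hlam_nonneg 0).trans (hΛ 0)))
  refine ⟨1 / Λ, by positivity, Lf.toNNReal / (c * Llo), by positivity,
    fun xbar hxbar hmin t => ?_⟩
  have hstar : f xbar + P1 xbar ≤ f (x (t + 1)) + P1 (x (t + 1)) := by
    have := hmin (x (t + 1))
    rw [Fobj_eq_of_feasible hxbar, Fobj_eq_of_feasible (hseq.feasible (t + 1))] at this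
    simpa using EReal.coe_le_coe_iff.1 this
  obtain ⟨u, hu, hfoc_t⟩ := hfoc t
  have hkey := objective_le_of_lagrangian hf hflip hfconv (fun i => hg i (x t)) hgconv
    (hlam_nonneg t) (hcompl t) hu hfoc_t hxbar
  have hdesc := hseq.descent t
  simp only [sub_zero] at hdesc ⊢
  rw [norm_sub_rev (x t)]
  exact fundamental_ineq_of_descent hc hLlo (NNReal.coe_nonneg _) (hseq.Lf_lb t)
    (hseq.le_stepsize hLlo.le hlam_nonneg t) (hΛ t) (sq_nonneg _) hkey hdesc hstar
end
end

section
/- Under Assumptions A, B, C (each g_i twice continuously differentiable) and E (P₂ = 0 and f, g₁, …, g_m convex), if bar F is a KL function with exponent α ∈ [0,1), then F is also a KL function with exponent α. -/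
open Set Filter Topology Metric Bornology RealInnerProductSpace
open scoped Classical

noncomputable section

/-!
Embed `x ↦ (x, x, w)` with each `wᵢ` above the Lipschitz modulus of `∇gᵢ`. Then
`bar F (x, x, w) = F x`, and by the descent lemma every moving ball around a point near
`(x, x, w)` lies in the feasible set, so `bar F ≥ F ∘ fst` there. Hence each regular, and then
each limiting, subgradient `ζ` of `F` at `x` yields the subgradient `(ζ, 0, 0)` of `bar F` at
`(x, x, w)`, of the same norm. Since `f` and `P₁` are convex and `P₂ = 0`, `∂F x` is nonempty at
feasible `x`, so `dist (0, ∂ bar F (x, x, w)) ≤ dist (0, ∂F x)` and the KL inequality of `bar F`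
at `(x̂, x̂, w)` pulls back to `F` at `x̂`.
-/

open scoped NNReal

section ConvexAnalysis

variable {E : Type*} [NormedAddCommGroup E] [InnerProductSpace ℝ E] [CompleteSpace E]

theorem ConvexOn.add_inner_le_of_hasGradientAt {φ : E → ℝ} {G y : E}
    (hφ : ConvexOn ℝ univ φ) (hG : HasGradientAt φ G y) (z : E) :
    φ y + ⟪G, z - y⟫ ≤ φ z := by
  let ℓ : ℝ →ᵃ[ℝ] E := AffineMap.lineMap y z
  have hderiv : HasDerivAt (φ ∘ ℓ) ⟪G, z - y⟫ 0 := by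
    have hG' : HasFDerivAt φ (InnerProductSpace.toDual ℝ E G) (ℓ 0) := by
      simpa [ℓ] using hG.hasFDerivAt
    simpa using hG'.comp_hasDerivAt 0 AffineMap.hasDerivAt_lineMap
  have := (hφ.comp_affineMap ℓ).le_slope_of_hasDerivAt
    (mem_univ 0) (mem_univ 1) one_pos hderiv
  simp only [slope_def_field, Function.comp_apply, AffineMap.lineMap_apply_one,
    AffineMap.lineMap_apply_zero, sub_zero, div_one, ℓ] at this
  linarith

theorem le_add_inner_add_sq_of_lipschitzWith_gradient {φ : E → ℝ} {φ' : E → E} {K : ℝ≥0}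
    (hφ : ∀ x, HasGradientAt φ (φ' x) x) (hK : LipschitzWith K φ') (y u : E) :
    φ u ≤ φ y + ⟪φ' y, u - y⟫ + K / 2 * ‖u - y‖ ^ 2 := by
  set d := u - y
  -- `ψ` is antitone on `[0, 1]` because `φ'` is `K`-Lipschitz.
  let ψ : ℝ → ℝ := fun t => φ (y + t • d) - t * ⟪φ' y, d⟫ - K * t ^ 2 * ‖d‖ ^ 2 / 2
  have hψ : ∀ t, HasDerivAt ψ (⟪φ' (y + t • d) - φ' y, d⟫ - K * t * ‖d‖ ^ 2) t := by
    intro t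
    have hline : HasDerivAt (fun s : ℝ => y + s • d) d t := by
      simpa using ((hasDerivAt_id t).smul_const d).const_add y
    have := (((hφ _).hasFDerivAt.comp_hasDerivAt t hline).sub
      ((hasDerivAt_id t).mul_const ⟪φ' y, d⟫)).sub
      ((((hasDerivAt_pow 2 t).const_mul (K : ℝ)).mul_const (‖d‖ ^ 2)).div_const 2)
    refine this.congr_deriv ?_
    simp only [InnerProductSpace.toDual_apply_apply, one_mul, Nat.cast_ofNat,
      Nat.add_one_sub_one, pow_one, inner_sub_left]
    ring
  have hψ' : ∀ t ∈ interior (Icc (0 : ℝ) 1), ⟪φ' (y + t • d) - φ' y, d⟫ - K * t * ‖d‖ ^ 2 ≤ 0 := by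
    intro t ht
    rw [interior_Icc] at ht
    have hlip : ‖φ' (y + t • d) - φ' y‖ ≤ K * (t * ‖d‖) := by
      simpa [dist_eq_norm, norm_smul, abs_of_pos ht.1] using hK.dist_le_mul (y + t • d) y
    nlinarith [real_inner_le_norm (φ' (y + t • d) - φ' y) d, norm_nonneg d,
      mul_le_mul_of_nonneg_right hlip (norm_nonneg d)]
  have hanti : AntitoneOn ψ (Icc 0 1) :=
    antitoneOn_of_hasDerivWithinAt_nonpos (convex_Icc 0 1)
      (fun t _ => (hψ t).continuousAt.continuousWithinAt) (fun t _ => (hψ t).hasDerivWithinAt) hψ'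
  have := hanti (left_mem_Icc.2 zero_le_one) (right_mem_Icc.2 zero_le_one) zero_le_one
  simp only [one_smul, add_sub_cancel, one_mul, one_pow, mul_one, zero_smul, add_zero, zero_mul,
    sub_zero, ne_eq, OfNat.ofNat_ne_zero, not_false_eq_true, zero_pow, mul_zero, zero_div, ψ, d]
    at this
  linarith

theorem ConvexOn.convexSubdiff_nonempty {P : E → ℝ} (hP : ConvexOn ℝ univ P)
    (hcont : Continuous P) (x : E) : (ConvexSubdiff P x).Nonempty := by
  -- Separate `(x, P x)` from the open strict epigraph; the functional is `(z, t) ↦ L (z, 0) + t c`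
  -- with `c < 0`, and `-L (·, 0) / c` is a subgradient.
  obtain ⟨L, hL⟩ := geometric_hahn_banach_open_point hP.convex_strict_epigraph
    (by simpa using isOpen_lt (hcont.comp continuous_fst) continuous_snd)
    (x := (x, P x)) (fun h => lt_irrefl _ h.2)
  set c := L (0, 1)
  have hsplit : ∀ z t, L (z, t) = L (z, 0) + t * c := fun z t => by
    have : ((z, t) : E × ℝ) = (z, 0) + t • (0, 1) := by ext <;> simp
    rw [this, map_add, map_smul, smul_eq_mul]
  have hsep : ∀ z t, P z < t → L (z, 0) + t * c < L (x, 0) + P x * c := fun z t h => by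
    rw [← hsplit, ← hsplit]
    exact hL (z, t) ⟨mem_univ z, h⟩
  have hc : c < 0 := by linarith [hsep x (P x + 1) (by linarith)]
  have hsupp : ∀ z, L (z, 0) + P z * c ≤ L (x, 0) + P x * c := fun z =>
    le_of_forall_pos_lt_add fun ε hε => by
      have hεc : ε / -c * c = -ε := by have := hc.ne; field_simp
      have := hsep z (P z + ε / -c) (by linarith [div_pos hε (neg_pos.2 hc)])
      rw [add_mul, hεc] at this
      linarith
  refine ⟨(InnerProductSpace.toDual ℝ E).symm ((-c)⁻¹ • L.comp (.inl ℝ E ℝ)), fun z => ?_⟩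
  have hlin : L (z - x, 0) = L (z, 0) - L (x, 0) := by rw [← map_sub, Prod.mk_sub_mk, sub_zero]
  rw [InnerProductSpace.toDual_symm_apply, smul_apply,
    ContinuousLinearMap.comp_apply, ContinuousLinearMap.inl_apply, hlin, smul_eq_mul,
    inv_mul_le_iff₀ (neg_pos.2 hc)]
  linarith [hsupp z]

end ConvexAnalysis

theorem Isometry.infDist_le_infDist_of_image_subset {X Y : Type*} [MetricSpace X]
    [MetricSpace Y] {ι : X → Y} (hι : Isometry ι) {S : Set X} {T : Set Y} (hST : ι '' S ⊆ T)
    (hS : S.Nonempty) (y : X) : infDist (ι y) T ≤ infDist y S :=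
  (infDist_le_infDist_of_subset hST (hS.image ι)).trans_eq (infDist_image hι)

section Subdifferential

variable {H H' : Type*} [NormedAddCommGroup H] [InnerProductSpace ℝ H]
  [NormedAddCommGroup H'] [InnerProductSpace ℝ H']

theorem mem_regularSubdiff_of_forall_le {h : H → EReal} {x ζ : H} {r : ℝ} (hx : h x = r)
    (hζ : ∀ z, ((r + ⟪ζ, z - x⟫ : ℝ) : EReal) ≤ h z) : ζ ∈ RegularSubdiff h x := by
  refine ⟨by simp [hx], by simp [hx], fun ε hε => Eventually.of_forall fun z => ?_⟩
  rw [hx, EReal.toReal_coe]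
  exact le_trans (EReal.coe_le_coe_iff.2 (by nlinarith [norm_nonneg (z - x)])) (hζ z)

theorem regularSubdiff_subset_limSubdiff (h : H → EReal) (x : H) :
    RegularSubdiff h x ⊆ LimSubdiff h x := fun _ hζ =>
  ⟨fun _ => x, fun _ => _, fun _ => hζ, tendsto_const_nhds, tendsto_const_nhds, tendsto_const_nhds⟩

theorem image_limSubdiff_subset {h : H → EReal} {k : H' → EReal} {e ι : H → H'}
    (he : Continuous e) (hι : Continuous ι) (hk : ∀ x, k (e x) = h x)
    (hreg : ∀ x, ι '' RegularSubdiff h x ⊆ RegularSubdiff k (e x)) (x : H) :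
    ι '' LimSubdiff h x ⊆ LimSubdiff k (e x) := by
  rintro _ ⟨ζ, ⟨xs, ζs, hζs, hxs, hhxs, hζlim⟩, rfl⟩
  refine ⟨e ∘ xs, ι ∘ ζs, fun j => hreg _ ⟨_, hζs j, rfl⟩, (he.tendsto x).comp hxs, ?_,
    (hι.tendsto ζ).comp hζlim⟩
  simpa [Function.comp_def, hk] using hhxs

theorem KLExpAt.of_comp {h : H → EReal} {k : H' → EReal} {e : H → H'} {α : ℝ} {xhat : H}
    (he : ContinuousAt e xhat) (hk : ∀ x, k (e x) = h x)
    (hd : ∀ x, h x ≠ ⊤ → infDist 0 (LimSubdiff k (e x)) ≤ infDist 0 (LimSubdiff h x))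
    (hKL : KLExpAt k α (e xhat)) : KLExpAt h α xhat := by
  obtain ⟨a₀, ha₀, a, ha, V, hV, hKL⟩ := hKL
  refine ⟨a₀, ha₀, a, ha, e ⁻¹' V, he.preimage_mem_nhds hV, fun x hx hlow hupp => ?_⟩
  have h1 := hKL (e x) hx (by rwa [hk, hk]) (by rwa [hk, hk])
  rw [hk, hk] at h1
  set c := a₀ * (1 - α) * ((h x).toReal - (h xhat).toReal) ^ (-α)
  have hdist := infDist_nonneg (x := (0 : H')) (s := LimSubdiff k (e x))
  have hc : 0 ≤ c := by
    by_contra hneg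
    nlinarith
  exact h1.trans (mul_le_mul_of_nonneg_left (hd x (ne_top_of_lt hupp)) hc)

end Subdifferential

section MovingBalls

variable {n m : ℕ} {f P1 P2 : Euc n → ℝ} {g : Fin m → Euc n → ℝ} {g' : Fin m → Euc n → Euc n}

def PS.mk (x y : Euc n) (w : EuclideanSpace ℝ (Fin m)) : PS n m :=
  WithLp.toLp 2 (x, WithLp.toLp 2 (y, w))

theorem continuous_PS_mk_self (w : EuclideanSpace ℝ (Fin m)) :
    Continuous fun x : Euc n => PS.mk x x w := by
  unfold PS.mk
  fun_prop

theorem isometry_PS_mk_zero : Isometry fun ζ : Euc n => PS.mk (m := m) ζ 0 0 :=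
  Isometry.of_dist_eq fun a b => WithLp.dist_toLp_fst 2 _ _ a b

theorem inner_PS_mk_zero_sub (ζ x y : Euc n) (w : EuclideanSpace ℝ (Fin m)) (q : PS n m) :
    ⟪PS.mk ζ 0 0, q - PS.mk x y w⟫ = ⟪ζ, q.ofLp.1 - x⟫ := by
  simp [PS.mk, WithLp.prod_inner_apply]

theorem barF_PS_mk_self (w : EuclideanSpace ℝ (Fin m)) (x : Euc n) :
    barF f P1 P2 g g' (PS.mk x x w) = Fobj f P1 P2 g x := by
  simp [barF, Fobj, barG, PS.mk]

theorem feasible_of_Fobj_ne_top {x : Euc n} (hx : Fobj f P1 P2 g x ≠ ⊤) : ∀ i, g i x ≤ 0 := by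
  by_contra h
  exact hx (if_neg h)

theorem Fobj_fst_le_barF {Lg : Fin m → ℝ≥0} (hg' : ∀ i x, HasGradientAt (g i) (g' i x) x)
    (hLg : ∀ i, LipschitzWith (Lg i) (g' i)) {q : PS n m}
    (hq : ∀ i, (Lg i : ℝ) ≤ q.ofLp.2.ofLp.2 i) : Fobj f P1 P2 g q.ofLp.1 ≤ barF f P1 P2 g g' q := by
  unfold barF
  split_ifs with hball
  · have hfeas : ∀ i, g i q.ofLp.1 ≤ 0 := fun i => by
      have hdesc := le_add_inner_add_sq_of_lipschitzWith_gradient (hg' i) (hLg i)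
        q.ofLp.2.ofLp.1 q.ofLp.1
      have hball_i := hball i
      unfold barG at hball_i
      nlinarith [mul_le_mul_of_nonneg_right (hq i) (sq_nonneg ‖q.ofLp.1 - q.ofLp.2.ofLp.1‖)]
    rw [Fobj, if_pos hfeas]
  · exact le_top

theorem PS_mk_mem_regularSubdiff_barF {Lg : Fin m → ℝ≥0}
    (hg' : ∀ i x, HasGradientAt (g i) (g' i x) x) (hLg : ∀ i, LipschitzWith (Lg i) (g' i))
    {w : EuclideanSpace ℝ (Fin m)} (hw : ∀ i, (Lg i : ℝ) < w i) {x ζ : Euc n}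
    (hζ : ζ ∈ RegularSubdiff (Fobj f P1 P2 g) x) :
    PS.mk ζ 0 0 ∈ RegularSubdiff (barF f P1 P2 g g') (PS.mk x x w) := by
  obtain ⟨hne_top, hne_bot, hev⟩ := hζ
  simp only [RegularSubdiff, mem_ofPred_eq, barF_PS_mk_self]
  refine ⟨hne_top, hne_bot, fun ε hε => ?_⟩
  have hfst : Tendsto (fun q : PS n m => q.ofLp.1) (𝓝 (PS.mk x x w)) (𝓝 x) :=
    (by fun_prop : Continuous fun q : PS n m => q.ofLp.1).tendsto _
  have hw' : ∀ᶠ q in 𝓝 (PS.mk x x w), ∀ i, (Lg i : ℝ) ≤ q.ofLp.2.ofLp.2 i :=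
    eventually_all.2 fun i =>
      ((by fun_prop : Continuous fun q : PS n m => q.ofLp.2.ofLp.2 i).tendsto _).eventually
        (eventually_ge_nhds (hw i))
  filter_upwards [hfst.eventually (hev ε hε), hw'] with q hq hqw
  refine le_trans ?_ (hq.trans (Fobj_fst_le_barF hg' hLg hqw))
  rw [inner_PS_mk_zero_sub]
  have hnorm : ‖q.ofLp.1 - x‖ ≤ ‖q - PS.mk x x w‖ := WithLp.norm_fst_le (x := q - PS.mk x x w)
  exact EReal.coe_le_coe_iff.2 (by nlinarith)

theorem Fobj_limSubdiff_nonempty {f' : Euc n → Euc n} (hf : ∀ x, HasGradientAt f (f' x) x)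
    (hfconv : ConvexOn ℝ univ f) (hP1conv : ConvexOn ℝ univ P1) (hP1cont : Continuous P1)
    {x : Euc n} (hx : ∀ i, g i x ≤ 0) : (LimSubdiff (Fobj f P1 (fun _ => 0) g) x).Nonempty := by
  obtain ⟨u, hu⟩ := hP1conv.convexSubdiff_nonempty hP1cont x
  refine ⟨f' x + u, regularSubdiff_subset_limSubdiff _ _ <|
    mem_regularSubdiff_of_forall_le (if_pos hx) fun z => ?_⟩
  unfold Fobj
  split_ifs
  · have hf_le := hfconv.add_inner_le_of_hasGradientAt (hf x) z
    have hP1_le := hu z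
    rw [inner_add_left]
    exact EReal.coe_le_coe_iff.2 (by dsimp only; linarith)
  · exact le_top

end MovingBalls

theorem stmt14_general {n m : ℕ} (f P1 P2 : Euc n → ℝ) (f' : Euc n → Euc n)
    (g : Fin m → Euc n → ℝ) (g' : Fin m → Euc n → Euc n)
    (Lf : ℝ) (Lg : Fin m → ℝ)
    (hAB : AssumptionAB f P1 P2 f' g g' Lf Lg)
    (hP2 : P2 = fun _ => 0) (hfconv : ConvexOn ℝ univ f)
    (α : ℝ)
    (hKLbar : ∀ p, (LimSubdiff (barF f P1 P2 g g') p).Nonempty →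
      KLExpAt (barF f P1 P2 g g') α p) :
    ∀ x, (LimSubdiff (Fobj f P1 P2 g) x).Nonempty →
      KLExpAt (Fobj f P1 P2 g) α x := by
  obtain ⟨hf', -, hP1conv, hP1cont, -, -, hg', hLg, -, -, -⟩ := hAB
  subst hP2
  let w : EuclideanSpace ℝ (Fin m) := WithLp.toLp 2 fun i => (Lg i).toNNReal + 1
  let ι : Euc n → PS n m := fun ζ => PS.mk ζ 0 0
  have hsub : ∀ x, ι '' LimSubdiff (Fobj f P1 (fun _ => 0) g) x ⊆
      LimSubdiff (barF f P1 (fun _ => 0) g g') (PS.mk x x w) :=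
    image_limSubdiff_subset (continuous_PS_mk_self w) isometry_PS_mk_zero.continuous
      (barF_PS_mk_self w) fun x => by
        rintro _ ⟨ζ, hζ, rfl⟩
        exact PS_mk_mem_regularSubdiff_barF hg' hLg (fun i => by simp [w]) hζ
  intro xhat hxhat
  refine KLExpAt.of_comp (continuous_PS_mk_self w).continuousAt (barF_PS_mk_self w)
    (fun x hx => ?_) (hKLbar _ ((hxhat.image ι).mono (hsub xhat)))
  exact isometry_PS_mk_zero.infDist_le_infDist_of_image_subset (hsub x)
    (Fobj_limSubdiff_nonempty hf' hfconv hP1conv hP1cont (feasible_of_Fobj_ne_top hx)) 0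

/-- in the convex setting, if `bar F` is a KL function with exponent
`α ∈ [0,1)`, then so is `F`. -/
theorem stmt14 {n m : ℕ} (f P1 P2 : Euc n → ℝ) (f' : Euc n → Euc n)
    (g : Fin m → Euc n → ℝ) (g' : Fin m → Euc n → Euc n)
    (Lf : ℝ) (Lg : Fin m → ℝ)
    (hAB : AssumptionAB f P1 P2 f' g g' Lf Lg)
    (hC : ∀ i, ContDiff ℝ 2 (g i))
    (hP2 : P2 = fun _ => 0) (hfconv : ConvexOn ℝ univ f)
    (hgconv : ∀ i, ConvexOn ℝ univ (g i))
    (α : ℝ) (hα0 : 0 ≤ α) (hα1 : α < 1)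
    (hKLbar : ∀ p, (LimSubdiff (barF f P1 P2 g g') p).Nonempty →
      KLExpAt (barF f P1 P2 g g') α p) :
    ∀ x, (LimSubdiff (Fobj f P1 P2 g) x).Nonempty →
      KLExpAt (Fobj f P1 P2 g) α x :=
  stmt14_general f P1 P2 f' g g' Lf Lg hAB hP2 hfconv α hKLbar
end
end

section
/- Let F(x) = ‖x‖₁ − μ‖x‖ + δ_{(1/2)‖A·−b‖²≤δ}(x), where μ ∈ [0,1], A ∈ ℝ^{q×n}, b ∈ ℝ^q and δ > 0. Then: (i) if μ ∈ [0,1), F is level-bounded; (ii) if μ = 1 and A has no zero columns, F is level-bounded. -/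
open Set Filter Topology Metric Bornology RealInnerProductSpace
open scoped Classical

noncomputable section

/-- The `ℓ₁` norm on `ℝᵏ`. -/
def l1norm {k : ℕ} (x : Euc k) : ℝ := ∑ i, |x i|

/-- The extended objective `‖x‖₁ − μ‖x‖ + δ_{(1/2)‖A·−b‖²≤δ}`. -/
def Fls {n q : ℕ} (A : Euc n →L[ℝ] Euc q) (b : Euc q) (μ δ : ℝ) (x : Euc n) : EReal :=
  if 1 / 2 * ‖A x - b‖ ^ 2 ≤ δ then ((l1norm x - μ * ‖x‖ : ℝ) : EReal) else ⊤


lemma l1_nonneg {k : ℕ} (x : Euc k) : 0 ≤ l1norm x :=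
  Finset.sum_nonneg fun i _ => abs_nonneg _

lemma norm_le_l1 {k : ℕ} (x : Euc k) : ‖x‖ ≤ l1norm x := by
  rw [EuclideanSpace.norm_eq]
  have h1 : ∑ i, ‖x i‖ ^ 2 ≤ (l1norm x) ^ 2 := by
    simpa [l1norm, Real.norm_eq_abs] using
      Finset.sum_sq_le_sq_sum_of_nonneg (f := fun i => |x i|)
        (s := Finset.univ) (fun i _ => abs_nonneg _)
  calc √(∑ i, ‖x i‖ ^ 2) ≤ √((l1norm x) ^ 2) := Real.sqrt_le_sqrt h1
    _ = l1norm x := Real.sqrt_sq (l1_nonneg x)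

lemma l1_smul {k : ℕ} (t : ℝ) (ht : 0 ≤ t) (x : Euc k) :
    l1norm (t • x) = t * l1norm x := by
  simp [l1norm, Finset.mul_sum, abs_mul, abs_of_nonneg ht]

lemma continuous_l1 {k : ℕ} : Continuous (l1norm (k := k)) :=
  continuous_finset_sum _ fun i _ => ((EuclideanSpace.proj i).continuous).abs

lemma aux_Au_ne_zero {n q : ℕ} (A : Euc n →L[ℝ] Euc q)
    (hA : ∀ j : Fin n, A (EuclideanSpace.single j (1 : ℝ)) ≠ 0)
    (u : Euc n) (hu : ‖u‖ = 1) (h1 : l1norm u ≤ 1) : A u ≠ 0 := by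
  have hsq : ∑ i, |u i| ^ 2 = 1 := by
    have h := EuclideanSpace.norm_eq u
    rw [hu] at h
    have h0 : (0:ℝ) ≤ ∑ i, ‖u i‖ ^ 2 := by positivity
    have h2 : ∑ i, ‖u i‖ ^ 2 = 1 := by nlinarith [Real.sq_sqrt h0]
    simpa [Real.norm_eq_abs] using h2
  have hle : ∀ i, |u i| ≤ 1 := fun i =>
    le_trans (Finset.single_le_sum (f := fun i => |u i|)
      (fun j _ => abs_nonneg _) (Finset.mem_univ i)) h1
  have hterm : ∀ i ∈ Finset.univ, |u i| ^ 2 ≤ |u i| := fun i _ => by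
    nlinarith [abs_nonneg (u i), hle i]
  have heq : ∑ i, |u i| ^ 2 = ∑ i, |u i| := by
    have hge : ∑ i, |u i| ^ 2 ≤ ∑ i, |u i| := Finset.sum_le_sum hterm
    have : ∑ i, |u i| ≤ ∑ i, |u i| ^ 2 := by rw [hsq]; exact h1
    linarith
  have hbool : ∀ i, |u i| = 0 ∨ |u i| = 1 := by
    intro i
    have h := (Finset.sum_eq_sum_iff_of_le hterm).1 heq i (Finset.mem_univ i)
    have h' : |u i| * (|u i| - 1) = 0 := by nlinarith
    rcases mul_eq_zero.mp h' with h'' | h''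
    · exact Or.inl h''
    · exact Or.inr (by linarith)
  obtain ⟨j, hj⟩ : ∃ j, |u j| ^ 2 ≠ 0 := by
    rcases Finset.exists_ne_zero_of_sum_ne_zero (by rw [hsq]; norm_num :
      ∑ i, |u i| ^ 2 ≠ 0) with ⟨j, _, hj⟩
    exact ⟨j, hj⟩
  have huj : |u j| = 1 := by
    rcases hbool j with h | h
    · exact absurd (by rw [h]; ring) hj
    · exact h
  have hzero : ∀ i, i ≠ j → u i = 0 := by
    intro i hij
    have hsplit : |u j| ^ 2 + ∑ i ∈ Finset.univ.erase j, |u i| ^ 2 = 1 :=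
      (Finset.add_sum_erase Finset.univ (fun i => |u i| ^ 2) (Finset.mem_univ j)).trans hsq
    have hrest : ∑ i ∈ Finset.univ.erase j, |u i| ^ 2 = 0 := by
      rw [huj] at hsplit; linarith
    have := (Finset.sum_eq_zero_iff_of_nonneg
      (fun i _ => by positivity)).1 hrest i (Finset.mem_erase.2 ⟨hij, Finset.mem_univ i⟩)
    have : |u i| = 0 := by nlinarith [abs_nonneg (u i)]
    exact abs_eq_zero.mp this
  have hrep : u = u j • EuclideanSpace.single j (1:ℝ) := by
    ext i
    rcases eq_or_ne i j with rfl | hij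
    · simp [EuclideanSpace.single_apply]
    · simp [EuclideanSpace.single_apply, hij, hzero i hij]
  have hujne : u j ≠ 0 := fun h => by simp [h] at huj
  rw [hrep, map_smul]
  exact smul_ne_zero hujne (hA j)

/-- level-boundedness of `F` for the least-squares constrained model:
(i) if `μ ∈ [0,1)`, `F` is level-bounded; (ii) if `μ = 1` and `A` has no zero
columns, `F` is level-bounded. -/
theorem stmt18 {n q : ℕ} (A : Euc n →L[ℝ] Euc q) (b : Euc q) (μ δ : ℝ)
    (hμ0 : 0 ≤ μ) (hμ1 : μ ≤ 1) (hδ : 0 < δ) :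
    (μ < 1 → ∀ σ : ℝ, IsBounded {x : Euc n | Fls A b μ δ x ≤ ((σ : ℝ) : EReal)}) ∧
    (μ = 1 → (∀ j : Fin n, A (EuclideanSpace.single j (1 : ℝ)) ≠ 0) →
      ∀ σ : ℝ, IsBounded {x : Euc n | Fls A b μ δ x ≤ ((σ : ℝ) : EReal)}) := by
  have extract : ∀ (σ : ℝ) (x : Euc n), Fls A b μ δ x ≤ ((σ : ℝ) : EReal) →
      1 / 2 * ‖A x - b‖ ^ 2 ≤ δ ∧ l1norm x - μ * ‖x‖ ≤ σ := by
    intro σ x hx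
    by_cases hc : 1 / 2 * ‖A x - b‖ ^ 2 ≤ δ
    · refine ⟨hc, ?_⟩
      rw [Fls, if_pos hc] at hx
      exact_mod_cast hx
    · rw [Fls, if_neg hc] at hx
      exact absurd hx (EReal.coe_lt_top σ).not_ge
  constructor
  · intro hμ σ
    rw [isBounded_iff_forall_norm_le]
    refine ⟨max 0 (σ / (1 - μ)), fun x hx => ?_⟩
    obtain ⟨-, h2⟩ := extract σ x hx
    have h3 : (1 - μ) * ‖x‖ ≤ σ := by nlinarith [norm_le_l1 x, norm_nonneg x]
    refine le_max_of_le_right ((le_div_iff₀ (by linarith)).2 ?_)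
    linarith [mul_comm (1 - μ) ‖x‖]
  · intro hμ hA σ
    subst hμ
    rcases Nat.eq_zero_or_pos n with hn | hn
    · subst hn
      rw [isBounded_iff_forall_norm_le]
      refine ⟨0, fun x _ => ?_⟩
      rw [EuclideanSpace.norm_eq]
      simp
    · set h : Euc n → ℝ := fun u => ‖A u‖ + (l1norm u - 1) with hh
      have hcont : Continuous h := (A.continuous.norm).add (continuous_l1.sub continuous_const)
      have hne : (Metric.sphere (0 : Euc n) 1).Nonempty := by
        refine ⟨EuclideanSpace.single ⟨0, hn⟩ (1 : ℝ), ?_⟩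
        simp [EuclideanSpace.norm_single]
      obtain ⟨u₀, hu₀, hmin⟩ :=
        (isCompact_sphere (0 : Euc n) 1).exists_isMinOn hne hcont.continuousOn
      have hu₀n : ‖u₀‖ = 1 := by simpa using hu₀
      have hc : 0 < h u₀ := by
        rcases lt_or_ge 0 (h u₀) with h' | h'
        · exact h'
        · exfalso
          have hAn : (0:ℝ) ≤ ‖A u₀‖ := norm_nonneg _
          have hl1 : 1 ≤ l1norm u₀ := hu₀n ▸ norm_le_l1 u₀
          simp only [hh] at h'
          have hA0 : A u₀ = 0 := norm_eq_zero.1 (by linarith)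
          exact aux_Au_ne_zero A hA u₀ hu₀n (by linarith) hA0
      set K : ℝ := ‖b‖ + Real.sqrt (2 * δ) + σ with hK
      rw [isBounded_iff_forall_norm_le]
      refine ⟨max 0 (K / h u₀), fun x hx => ?_⟩
      obtain ⟨h1, h2⟩ := extract σ x hx
      have hAx : ‖A x‖ ≤ ‖b‖ + Real.sqrt (2 * δ) := by
        have h3 : ‖A x - b‖ ≤ Real.sqrt (2 * δ) := by
          rw [← Real.sqrt_sq (norm_nonneg (A x - b))]
          apply Real.sqrt_le_sqrt; nlinarith
        calc ‖A x‖ = ‖(A x - b) + b‖ := by rw [sub_add_cancel]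
          _ ≤ ‖A x - b‖ + ‖b‖ := norm_add_le _ _
          _ ≤ ‖b‖ + Real.sqrt (2 * δ) := by linarith
      rcases eq_or_ne x 0 with rfl | hx0
      · simp
      · have ht : 0 < ‖x‖ := norm_pos_iff.2 hx0
        have hus : (‖x‖⁻¹ • x) ∈ Metric.sphere (0 : Euc n) 1 := by
          simp [norm_smul, abs_of_pos (inv_pos.2 ht), inv_mul_cancel₀ ht.ne']
        have hmin' : h u₀ ≤ h (‖x‖⁻¹ • x) := hmin hus
        have hAu : ‖A (‖x‖⁻¹ • x)‖ = ‖x‖⁻¹ * ‖A x‖ := by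
          rw [map_smul, norm_smul, Real.norm_eq_abs, abs_of_pos (inv_pos.2 ht)]
        have hl1u : l1norm (‖x‖⁻¹ • x) = ‖x‖⁻¹ * l1norm x :=
          l1_smul _ (inv_nonneg.2 ht.le) x
        simp only [hh, hAu, hl1u] at hmin'
        have hct : h u₀ * ‖x‖ ≤ ‖A x‖ + l1norm x - ‖x‖ := by
          have := mul_le_mul_of_nonneg_right hmin' ht.le
          have hinv : ‖x‖⁻¹ * ‖x‖ = 1 := inv_mul_cancel₀ ht.ne'
          calc h u₀ * ‖x‖ ≤ (‖x‖⁻¹ * ‖A x‖ + (‖x‖⁻¹ * l1norm x - 1)) * ‖x‖ := this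
            _ = ‖A x‖ * (‖x‖⁻¹ * ‖x‖) + l1norm x * (‖x‖⁻¹ * ‖x‖) - ‖x‖ := by ring
            _ = ‖A x‖ + l1norm x - ‖x‖ := by rw [hinv]; ring
        have hKb : h u₀ * ‖x‖ ≤ K := by
          rw [hK]; nlinarith
        refine le_max_of_le_right ((le_div_iff₀ hc).2 ?_)
        linarith [mul_comm (h u₀) ‖x‖]
end
end
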